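/- arXiv:1507.03566 — 2 statements merged into one kernel-verified Lean document; each statement's English description precedes it below -/
import Mathlib

section
/- Let 𝒜 : ℝ^{n₁×n₂} → ℝ^m satisfy 2r-RIP with constant δ_{2r}. Then for all matrices X, Y ∈ ℝ^{n₁×n₂} of rank at most r, |⟨𝒜(X), 𝒜(Y)⟩ − ⟨X, Y⟩| ≤ δ_{2r}·‖X‖_F·‖Y‖_F, where ⟨X, Y⟩ = Tr(XᵀY) is the trace inner product on matrices and ⟨·,·⟩ on ℝ^m is the Euclidean inner product. -/
open Matrix

noncomputable def vnorm {ι : Type*} [Fintype ι] (v : ι → ℝ) : ℝ :=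
  Real.sqrt (∑ i, v i ^ 2)

noncomputable def frob {α β : Type*} [Fintype α] [Fintype β] (M : Matrix α β ℝ) : ℝ :=
  Real.sqrt (∑ i, ∑ j, M i j ^ 2)

noncomputable def sval {α β : Type*} [Fintype α] [Fintype β] (M : Matrix α β ℝ) (k : ℕ) : ℝ :=
  sSup { t : ℝ | ∃ V : Submodule ℝ (β → ℝ), Module.finrank ℝ V = k ∧
    ∀ v ∈ V, t * vnorm v ≤ vnorm (M.mulVec v) }

noncomputable def opNorm {α β : Type*} [Fintype α] [Fintype β] (M : Matrix α β ℝ) : ℝ :=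
  sval M 1

noncomputable def pdist {α ρ : Type*} [Fintype α] [Fintype ρ] [DecidableEq ρ]
    (U X : Matrix α ρ ℝ) : ℝ :=
  sInf { d : ℝ | ∃ R : Matrix ρ ρ ℝ, Rᵀ * R = 1 ∧ d = frob (U - X * R) }

noncomputable def mip {α β : Type*} [Fintype α] [Fintype β] (A B : Matrix α β ℝ) : ℝ :=
  ∑ i, ∑ j, A i j * B i j

noncomputable def mapA {m : ℕ} {α β : Type*} [Fintype α] [Fintype β]
    (A : Fin m → Matrix α β ℝ) (Z : Matrix α β ℝ) : Fin m → ℝ :=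
  fun k => mip (A k) Z

def HasRIP {m n₁ n₂ : ℕ} (A : Fin m → Matrix (Fin n₁) (Fin n₂) ℝ) (s : ℕ) (δ : ℝ) : Prop :=
  ∀ Z : Matrix (Fin n₁) (Fin n₂) ℝ, Z.rank ≤ s →
    (1 - δ) * frob Z ^ 2 ≤ ∑ k, mapA A Z k ^ 2 ∧
      ∑ k, mapA A Z k ^ 2 ≤ (1 + δ) * frob Z ^ 2

noncomputable def gradU {m n₁ n₂ r : ℕ} (A : Fin m → Matrix (Fin n₁) (Fin n₂) ℝ)
    (M : Matrix (Fin n₁) (Fin n₂) ℝ)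
    (U : Matrix (Fin n₁) (Fin r) ℝ) (V : Matrix (Fin n₂) (Fin r) ℝ) :
    Matrix (Fin n₁) (Fin r) ℝ :=
  (∑ k, mip (A k) (U * Vᵀ - M) • (A k * V)) + (1 / 4 : ℝ) • (U * (Uᵀ * U - Vᵀ * V))

noncomputable def gradV {m n₁ n₂ r : ℕ} (A : Fin m → Matrix (Fin n₁) (Fin n₂) ℝ)
    (M : Matrix (Fin n₁) (Fin n₂) ℝ)
    (U : Matrix (Fin n₁) (Fin r) ℝ) (V : Matrix (Fin n₂) (Fin r) ℝ) :
    Matrix (Fin n₂) (Fin r) ℝ :=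
  (∑ k, mip (A k) (U * Vᵀ - M) • ((A k)ᵀ * U)) + (1 / 4 : ℝ) • (V * (Vᵀ * V - Uᵀ * U))

noncomputable def gradg {m n₁ n₂ r : ℕ} (A : Fin m → Matrix (Fin n₁) (Fin n₂) ℝ)
    (M : Matrix (Fin n₁) (Fin n₂) ℝ)
    (U : Matrix (Fin n₁) (Fin r) ℝ) (V : Matrix (Fin n₂) (Fin r) ℝ) :
    Matrix (Fin n₁ ⊕ Fin n₂) (Fin r) ℝ :=
  Matrix.fromRows (gradU A M U V) (gradV A M U V)

section aux

variable {n₁ n₂ m : ℕ}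

lemma my_rank_add_le (X Y : Matrix (Fin n₁) (Fin n₂) ℝ) : (X + Y).rank ≤ X.rank + Y.rank := by
  unfold Matrix.rank
  refine le_trans (Submodule.finrank_mono ?_)
    (Submodule.finrank_add_le_finrank_add_finrank _ _)
  rintro v ⟨w, rfl⟩
  rw [Matrix.mulVecLin_apply, Matrix.add_mulVec]
  exact Submodule.add_mem_sup ⟨w, rfl⟩ ⟨w, rfl⟩

lemma my_rank_smul_le (c : ℝ) (X : Matrix (Fin n₁) (Fin n₂) ℝ) : (c • X).rank ≤ X.rank := by
  unfold Matrix.rank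
  refine Submodule.finrank_mono ?_
  rintro v ⟨w, rfl⟩
  exact ⟨c • w, by simp [Matrix.mulVecLin_apply, Matrix.smul_mulVec,
    Matrix.mulVec_smul]⟩

lemma frob_sq {α β : Type*} [Fintype α] [Fintype β] (Z : Matrix α β ℝ) :
    frob Z ^ 2 = ∑ i, ∑ j, Z i j ^ 2 := by
  rw [frob, Real.sq_sqrt]
  exact Finset.sum_nonneg fun i _ => Finset.sum_nonneg fun j _ => sq_nonneg _

lemma mapA_add (A : Fin m → Matrix (Fin n₁) (Fin n₂) ℝ) (X Y : Matrix (Fin n₁) (Fin n₂) ℝ)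
    (k : Fin m) : mapA A (X + Y) k = mapA A X k + mapA A Y k := by
  simp [mapA, mip, Matrix.add_apply, mul_add, Finset.sum_add_distrib]

lemma mapA_smul (A : Fin m → Matrix (Fin n₁) (Fin n₂) ℝ) (c : ℝ)
    (X : Matrix (Fin n₁) (Fin n₂) ℝ) (k : Fin m) : mapA A (c • X) k = c * mapA A X k := by
  simp only [mapA, mip, Matrix.smul_apply, smul_eq_mul, Finset.mul_sum]
  exact Finset.sum_congr rfl fun i _ => Finset.sum_congr rfl fun j _ => by ring

/-- Key polarization estimate. -/
lemma key {r : ℕ} (A : Fin m → Matrix (Fin n₁) (Fin n₂) ℝ) (δ : ℝ)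
    (hRIP : HasRIP A (2 * r) δ)
    (X Y : Matrix (Fin n₁) (Fin n₂) ℝ) (hX : X.rank ≤ r) (hY : Y.rank ≤ r) :
    |(∑ k, mapA A X k * mapA A Y k) - mip X Y| ≤
      δ * ((∑ i, ∑ j, X i j ^ 2) + (∑ i, ∑ j, Y i j ^ 2)) / 2 := by
  have hr1 : (X + Y).rank ≤ 2 * r :=
    le_trans (my_rank_add_le X Y) (by omega)
  have hr2 : (X + (-1 : ℝ) • Y).rank ≤ 2 * r :=
    le_trans (my_rank_add_le X _) (by
      have := my_rank_smul_le (-1 : ℝ) Y; omega)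
  have h1 := hRIP _ hr1
  have h2 := hRIP _ hr2
  rw [frob_sq] at h1 h2
  have e1 : ∑ k, mapA A (X + Y) k ^ 2 =
      (∑ k, mapA A X k ^ 2) + 2 * (∑ k, mapA A X k * mapA A Y k) + ∑ k, mapA A Y k ^ 2 := by
    rw [show (∑ k, mapA A X k ^ 2) + 2 * (∑ k, mapA A X k * mapA A Y k) + ∑ k, mapA A Y k ^ 2
        = ∑ k, (mapA A X k ^ 2 + 2 * (mapA A X k * mapA A Y k) + mapA A Y k ^ 2) by
      rw [Finset.sum_add_distrib, Finset.sum_add_distrib, Finset.mul_sum]]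
    exact Finset.sum_congr rfl fun k _ => by rw [mapA_add]; ring
  have e2 : ∑ k, mapA A (X + (-1 : ℝ) • Y) k ^ 2 =
      (∑ k, mapA A X k ^ 2) - 2 * (∑ k, mapA A X k * mapA A Y k) + ∑ k, mapA A Y k ^ 2 := by
    rw [show (∑ k, mapA A X k ^ 2) - 2 * (∑ k, mapA A X k * mapA A Y k) + ∑ k, mapA A Y k ^ 2
        = ∑ k, (mapA A X k ^ 2 - 2 * (mapA A X k * mapA A Y k) + mapA A Y k ^ 2) by
      rw [Finset.sum_add_distrib, Finset.sum_sub_distrib, Finset.mul_sum]]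
    exact Finset.sum_congr rfl fun k _ => by rw [mapA_add, mapA_smul]; ring
  have f1 : ∑ i, ∑ j, (X + Y) i j ^ 2 =
      (∑ i, ∑ j, X i j ^ 2) + 2 * mip X Y + ∑ i, ∑ j, Y i j ^ 2 := by
    rw [show (∑ i, ∑ j, X i j ^ 2) + 2 * mip X Y + ∑ i, ∑ j, Y i j ^ 2
        = ∑ i, ∑ j, (X i j ^ 2 + 2 * (X i j * Y i j) + Y i j ^ 2) by
      simp only [mip, Finset.sum_add_distrib, Finset.mul_sum]]
    exact Finset.sum_congr rfl fun i _ => Finset.sum_congr rfl fun j _ => by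
      simp [Matrix.add_apply]; ring
  have f2 : ∑ i, ∑ j, (X + (-1 : ℝ) • Y) i j ^ 2 =
      (∑ i, ∑ j, X i j ^ 2) - 2 * mip X Y + ∑ i, ∑ j, Y i j ^ 2 := by
    rw [show (∑ i, ∑ j, X i j ^ 2) - 2 * mip X Y + ∑ i, ∑ j, Y i j ^ 2
        = ∑ i, ∑ j, (X i j ^ 2 - 2 * (X i j * Y i j) + Y i j ^ 2) by
      simp only [mip, Finset.sum_add_distrib, Finset.sum_sub_distrib, Finset.mul_sum]]
    exact Finset.sum_congr rfl fun i _ => Finset.sum_congr rfl fun j _ => by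
      simp [Matrix.add_apply, Matrix.smul_apply]; ring
  rw [e1, f1] at h1
  rw [e2, f2] at h2
  rw [abs_le]
  constructor <;> nlinarith [h1.1, h1.2, h2.1, h2.2]

end aux

/-- RIP implies approximate preservation of inner products. -/
theorem rip_inner_product {n₁ n₂ m : ℕ}
    (A : Fin m → Matrix (Fin n₁) (Fin n₂) ℝ) (r : ℕ) (δ : ℝ)
    (hRIP : HasRIP A (2 * r) δ)
    (X Y : Matrix (Fin n₁) (Fin n₂) ℝ) (hX : X.rank ≤ r) (hY : Y.rank ≤ r) :
    |(∑ k, mapA A X k * mapA A Y k) - mip X Y| ≤ δ * frob X * frob Y := by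
  have hfX : 0 ≤ frob X := Real.sqrt_nonneg _
  have hfY : 0 ≤ frob Y := Real.sqrt_nonneg _
  -- handle zero cases
  by_cases hX0 : frob X = 0
  · have hXz : X = 0 := by
      have hs : ∑ i, ∑ j, X i j ^ 2 = 0 := by
        have := frob_sq X; rw [hX0] at this; linarith [this.symm]
      ext i j
      have hi := (Finset.sum_eq_zero_iff_of_nonneg (fun i _ =>
        Finset.sum_nonneg fun j _ => sq_nonneg (X i j))).mp hs i (Finset.mem_univ i)
      have hj := (Finset.sum_eq_zero_iff_of_nonneg (fun j _ => sq_nonneg (X i j))).mp hi j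
        (Finset.mem_univ j)
      exact (pow_eq_zero_iff two_ne_zero).mp hj
    subst hXz
    simp [mapA, mip, hX0]
  by_cases hY0 : frob Y = 0
  · have hYz : Y = 0 := by
      have hs : ∑ i, ∑ j, Y i j ^ 2 = 0 := by
        have := frob_sq Y; rw [hY0] at this; linarith [this.symm]
      ext i j
      have hi := (Finset.sum_eq_zero_iff_of_nonneg (fun i _ =>
        Finset.sum_nonneg fun j _ => sq_nonneg (Y i j))).mp hs i (Finset.mem_univ i)
      have hj := (Finset.sum_eq_zero_iff_of_nonneg (fun j _ => sq_nonneg (Y i j))).mp hi j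
        (Finset.mem_univ j)
      exact (pow_eq_zero_iff two_ne_zero).mp hj
    subst hYz
    simp [mapA, mip, hY0]
  have hfXp : 0 < frob X := lt_of_le_of_ne hfX (Ne.symm hX0)
  have hfYp : 0 < frob Y := lt_of_le_of_ne hfY (Ne.symm hY0)
  set c : ℝ := Real.sqrt (frob Y / frob X) with hc
  have hcpos : 0 < c := Real.sqrt_pos.mpr (div_pos hfYp hfXp)
  have hc2 : c ^ 2 = frob Y / frob X := Real.sq_sqrt (le_of_lt (div_pos hfYp hfXp))
  have hX' : (c • X).rank ≤ r := le_trans (my_rank_smul_le c X) hX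
  have hY' : (c⁻¹ • Y).rank ≤ r := le_trans (my_rank_smul_le c⁻¹ Y) hY
  have hkey := key A δ hRIP (c • X) (c⁻¹ • Y) hX' hY'
  have hB : ∑ k, mapA A (c • X) k * mapA A (c⁻¹ • Y) k = ∑ k, mapA A X k * mapA A Y k := by
    refine Finset.sum_congr rfl fun k _ => ?_
    rw [mapA_smul, mapA_smul]
    field_simp
  have hmip : mip (c • X) (c⁻¹ • Y) = mip X Y := by
    simp only [mip, Matrix.smul_apply, smul_eq_mul]
    refine Finset.sum_congr rfl fun i _ => Finset.sum_congr rfl fun j _ => ?_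
    field_simp
  have hSX : ∑ i, ∑ j, (c • X) i j ^ 2 = c ^ 2 * frob X ^ 2 := by
    rw [← frob_sq]
    simp only [Matrix.smul_apply, smul_eq_mul, frob_sq, mul_pow, ← Finset.mul_sum]
  have hSY : ∑ i, ∑ j, (c⁻¹ • Y) i j ^ 2 = (c ^ 2)⁻¹ * frob Y ^ 2 := by
    rw [← frob_sq]
    simp only [Matrix.smul_apply, smul_eq_mul, frob_sq, mul_pow, ← Finset.mul_sum, inv_pow]
  rw [hB, hmip, hSX, hSY, hc2] at hkey
  have hrw : δ * (frob Y / frob X * frob X ^ 2 + (frob Y / frob X)⁻¹ * frob Y ^ 2) / 2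
      = δ * frob X * frob Y := by
    field_simp
    ring
  rwa [hrw] at hkey
end

section
/- Let X, U ∈ ℝ^{n×r} with dist(U, X) ≤ (1/4)‖X‖_{op}. Then ‖UUᵀ − XXᵀ‖_F ≤ (9/4)·‖X‖_{op}·dist(U, X). -/
open Matrix

/-!
Write `U = XR + Δ` with `R` orthogonal. Since `(XR)(XR)ᵀ = XXᵀ`,
`UUᵀ - XXᵀ = XRΔᵀ + (XRΔᵀ)ᵀ + ΔΔᵀ`, and `XR` has the same operator norm as `X`, so
`‖UUᵀ - XXᵀ‖_F ≤ 2‖X‖_op‖Δ‖_F + ‖Δ‖_F²`. The right-hand side is continuous in `‖Δ‖_F`, so the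
bound passes to the infimum `d = dist(U, X)`, and `d ≤ ‖X‖_op / 4` gives
`2‖X‖_op d + d² ≤ (9/4)‖X‖_op d`.
-/

section Norms

variable {α β γ : Type*} [Fintype α] [Fintype β] [Fintype γ]

attribute [local instance] Matrix.frobeniusNormedAddCommGroup

lemma vnorm_eq_norm (v : α → ℝ) : vnorm v = ‖WithLp.toLp 2 v‖ := by
  simp [vnorm, EuclideanSpace.norm_eq]

lemma frob_eq_norm (M : Matrix α β ℝ) : frob M = ‖M‖ := by
  simp [frob, Matrix.frobenius_norm_def, Real.sqrt_eq_rpow]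

lemma vnorm_nonneg (v : α → ℝ) : 0 ≤ vnorm v := Real.sqrt_nonneg _

lemma vnorm_sq (v : α → ℝ) : vnorm v ^ 2 = ∑ i, v i ^ 2 := Real.sq_sqrt (by positivity)

lemma frob_nonneg (M : Matrix α β ℝ) : 0 ≤ frob M := Real.sqrt_nonneg _

lemma frob_add_le (A B : Matrix α β ℝ) : frob (A + B) ≤ frob A + frob B := by
  simpa only [frob_eq_norm] using norm_add_le A B

lemma frob_transpose (M : Matrix α β ℝ) : frob Mᵀ = frob M := by
  simp only [frob_eq_norm, Matrix.frobenius_norm_transpose]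

lemma frob_mul_le (A : Matrix α β ℝ) (B : Matrix β γ ℝ) : frob (A * B) ≤ frob A * frob B := by
  simpa only [frob_eq_norm] using Matrix.frobenius_norm_mul A B

lemma vnorm_smul (c : ℝ) (v : α → ℝ) : vnorm (c • v) = |c| * vnorm v := by
  simp only [vnorm_eq_norm, WithLp.toLp_smul, norm_smul, Real.norm_eq_abs]

lemma vnorm_mulVec_of_transpose_mul_self_eq_one [DecidableEq α] {R : Matrix α α ℝ}
    (hR : Rᵀ * R = 1) (v : α → ℝ) : vnorm (R *ᵥ v) = vnorm v := by
  have hdot : (R *ᵥ v) ⬝ᵥ (R *ᵥ v) = v ⬝ᵥ v := by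
    rw [dotProduct_mulVec, ← mulVec_transpose, mulVec_mulVec, hR, one_mulVec]
  simpa only [vnorm, dotProduct, sq] using congrArg Real.sqrt hdot

lemma vnorm_pos {v : α → ℝ} (hv : v ≠ 0) : 0 < vnorm v := by
  rw [vnorm_eq_norm, norm_pos_iff]
  exact fun h => hv (congrArg WithLp.ofLp h)

lemma vnorm_mulVec_le (M : Matrix α β ℝ) (v : β → ℝ) : vnorm (M *ᵥ v) ≤ frob M * vnorm v := by
  have h := frob_mul_le M (replicateCol Unit v)
  simpa only [← replicateCol_mulVec, frob_eq_norm, Matrix.frobenius_norm_replicateCol,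
    ← vnorm_eq_norm] using h

lemma frob_mul_le_of_vnorm_mulVec_le {N : ℝ} (hN : 0 ≤ N) {B : Matrix α β ℝ}
    (hB : ∀ v, vnorm (B *ᵥ v) ≤ N * vnorm v) (M : Matrix β γ ℝ) :
    frob (B * M) ≤ N * frob M := by
  have hcol : ∀ j, ∑ i, (B * M) i j ^ 2 ≤ N ^ 2 * ∑ k, M k j ^ 2 := fun j => by
    have h := pow_le_pow_left₀ (vnorm_nonneg _) (hB fun k => M k j) 2
    rwa [mul_pow, vnorm_sq, vnorm_sq] at h
  calc frob (B * M) = √(∑ j, ∑ i, (B * M) i j ^ 2) := by rw [frob, Finset.sum_comm]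
    _ ≤ √(N ^ 2 * ∑ j, ∑ k, M k j ^ 2) := by
      rw [Finset.mul_sum]
      exact Real.sqrt_le_sqrt (Finset.sum_le_sum fun j _ => hcol j)
    _ = N * frob M := by rw [Real.sqrt_mul (sq_nonneg N), Real.sqrt_sq hN, frob, Finset.sum_comm]

end Norms

section OpNorm

variable {α β : Type*} [Fintype α] [Fintype β]

lemma sval_nonneg (M : Matrix α β ℝ) (k : ℕ) : 0 ≤ sval M k := by
  by_cases hk : ∃ V : Submodule ℝ (β → ℝ), Module.finrank ℝ V = k
  · obtain ⟨V, hV⟩ := hk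
    exact Real.sSup_nonneg' ⟨0, ⟨V, hV, fun v _ => by simpa using vnorm_nonneg _⟩, le_rfl⟩
  · push Not at hk
    simp [sval, hk]

lemma opNorm_nonneg (M : Matrix α β ℝ) : 0 ≤ opNorm M := sval_nonneg M 1

lemma vnorm_mulVec_le_opNorm_mul (M : Matrix α β ℝ) (v : β → ℝ) :
    vnorm (M *ᵥ v) ≤ opNorm M * vnorm v := by
  rcases eq_or_ne v 0 with rfl | hv
  · simp [vnorm]
  have hbdd : BddAbove {t : ℝ | ∃ V : Submodule ℝ (β → ℝ), Module.finrank ℝ V = 1 ∧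
      ∀ v ∈ V, t * vnorm v ≤ vnorm (M *ᵥ v)} := by
    refine ⟨frob M, fun t ⟨V, hV, ht⟩ => ?_⟩
    obtain ⟨⟨w, hwV⟩, hw⟩ := Module.finrank_pos_iff_exists_ne_zero.mp (hV ▸ one_pos)
    have hw_pos : 0 < vnorm w := vnorm_pos fun h => hw (Subtype.ext h)
    exact le_of_mul_le_mul_right ((ht w hwV).trans (vnorm_mulVec_le M w)) hw_pos
  have hratio : vnorm (M *ᵥ v) / vnorm v ≤ opNorm M := by
    refine le_csSup hbdd ⟨Submodule.span ℝ {v}, finrank_span_singleton hv, fun w hw => ?_⟩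
    obtain ⟨c, rfl⟩ := Submodule.mem_span_singleton.mp hw
    rw [mulVec_smul, vnorm_smul, vnorm_smul, div_mul_comm,
      mul_div_cancel_right₀ _ (vnorm_pos hv).ne']
  rwa [div_le_iff₀ (vnorm_pos hv)] at hratio

end OpNorm

section Procrustes

variable {α ρ : Type*} [Fintype α] [Fintype ρ] [DecidableEq ρ]

lemma frob_mul_transpose_sub_le {U X : Matrix α ρ ℝ} {R : Matrix ρ ρ ℝ} (hR : Rᵀ * R = 1) :
    frob (U * Uᵀ - X * Xᵀ) ≤ 2 * opNorm X * frob (U - X * R) + frob (U - X * R) ^ 2 := by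
  set Δ := U - X * R
  have hsplit : U * Uᵀ - X * Xᵀ = X * R * Δᵀ + (X * R * Δᵀ)ᵀ + Δ * Δᵀ := by
    have hU : U = X * R + Δ := by simp [Δ]
    have hXX : X * R * (X * R)ᵀ = X * Xᵀ := by
      rw [transpose_mul, Matrix.mul_assoc, ← Matrix.mul_assoc R, mul_eq_one_comm.mp hR,
        Matrix.one_mul]
    rw [hU, ← hXX]
    simp only [transpose_add, Matrix.add_mul, Matrix.mul_add, transpose_mul, transpose_transpose]
    abel
  have hXR : ∀ v, vnorm ((X * R) *ᵥ v) ≤ opNorm X * vnorm v := fun v => by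
    rw [← mulVec_mulVec, ← vnorm_mulVec_of_transpose_mul_self_eq_one hR v]
    exact vnorm_mulVec_le_opNorm_mul X _
  have hcross : frob (X * R * Δᵀ) ≤ opNorm X * frob Δ := by
    simpa only [frob_transpose] using frob_mul_le_of_vnorm_mulVec_le (opNorm_nonneg X) hXR Δᵀ
  have hsq : frob (Δ * Δᵀ) ≤ frob Δ ^ 2 := by
    simpa only [frob_transpose, sq] using frob_mul_le Δ Δᵀ
  calc frob (U * Uᵀ - X * Xᵀ)
      ≤ frob (X * R * Δᵀ) + frob (X * R * Δᵀ)ᵀ + frob (Δ * Δᵀ) := by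
        rw [hsplit]
        exact (frob_add_le _ _).trans (add_le_add_left (frob_add_le _ _) _)
    _ ≤ 2 * opNorm X * frob Δ + frob Δ ^ 2 := by
        rw [frob_transpose]
        linarith

lemma pdist_mem_of_isClosed {U X : Matrix α ρ ℝ} {P : Set ℝ} (hP : IsClosed P)
    (h : ∀ R : Matrix ρ ρ ℝ, Rᵀ * R = 1 → frob (U - X * R) ∈ P) : pdist U X ∈ P := by
  refine hP.closure_subset_iff.mpr ?_ (csInf_mem_closure ⟨_, 1, by simp, rfl⟩ ⟨0, ?_⟩)
  all_goals rintro _ ⟨R, hR, rfl⟩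
  exacts [h R hR, frob_nonneg _]

lemma pdist_nonneg (U X : Matrix α ρ ℝ) : 0 ≤ pdist U X :=
  pdist_mem_of_isClosed isClosed_Ici fun _ _ => frob_nonneg _

end Procrustes

/-- Bounding ‖UUᵀ − XXᵀ‖_F by dist(U, X). -/
theorem frob_diff_le_dist {n r : ℕ} (X U : Matrix (Fin n) (Fin r) ℝ)
    (h : pdist U X ≤ (1 / 4) * opNorm X) :
    frob (U * Uᵀ - X * Xᵀ) ≤ (9 / 4) * opNorm X * pdist U X := by
  have hquad : frob (U * Uᵀ - X * Xᵀ) ≤ 2 * opNorm X * pdist U X + pdist U X ^ 2 :=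
    pdist_mem_of_isClosed (P := {t | frob (U * Uᵀ - X * Xᵀ) ≤ 2 * opNorm X * t + t ^ 2})
      (isClosed_le continuous_const (by fun_prop)) fun _ hR => frob_mul_transpose_sub_le hR
  nlinarith [pdist_nonneg U X]
end
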